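/- Let p be a prime with p ≡ 3 (mod 4). Then the densities r(N_{p^s}) = |N_{p^s}|/p^s converge to 1/(p+1) as s → ∞. -/

import Mathlib

/-!
A residue `m` modulo `p ^ s` is a sum of two squares iff `padicValNat p m.val` is even. If the
valuation is `2 * k`, then `m = (p ^ k) ^ 2 * u` with `p ∤ u`; such a `u` is a sum of two squares
modulo `p` (as in every finite field) and, the square root of `u - b ^ 2` being simple, Newton's
iteration lifts this to every power of `p`. Conversely, if `x ^ 2 + y ^ 2 ≡ m` with
`padicValNat p m < s`, the two sides have the same valuation, which is even for a sum of two
squares since `p % 4 = 3`.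

Writing `f s` for the number of `n < p ^ s` of odd valuation, `n ↦ p * n` matches those below
`p ^ (s + 1)` with the nonzero `n < p ^ s` of even valuation, so `f (s + 1) + f s + 1 = p ^ s`,
whence `f s * (p + 1) = p ^ s - p ^ (s % 2)` and `f s / p ^ s → 1 / (p + 1)`.
-/

open Filter

/-- `S_n`: the set of elements of `ℤ/nℤ` expressible as a sum of two squares. -/
def sumTwoSquares (n : ℕ) : Set (ZMod n) := {m | ∃ x y : ZMod n, m = x ^ 2 + y ^ 2}

/-- `N_n`: the set of elements of `ℤ/nℤ` not expressible as a sum of two squares. -/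
def notSumTwoSquares (n : ℕ) : Set (ZMod n) := (sumTwoSquares n)ᶜ

open Finset

theorem exists_isCoprime_sq_sub_dvd_pow_succ {R : Type*} [CommRing R] {p a m : R}
    (hcop : IsCoprime (2 * a) p) (hdvd : p ∣ a ^ 2 - m) (t : ℕ) :
    ∃ x, IsCoprime (2 * x) p ∧ p ^ (t + 1) ∣ x ^ 2 - m := by
  induction t with
  | zero => exact ⟨a, hcop, by simpa using hdvd⟩
  | succ t ih =>
    obtain ⟨x, hx, d, hd⟩ := ih
    obtain ⟨u, v, huv⟩ := id hx
    -- Newton's step `x ↦ x - (x ^ 2 - m) / (2 * x)`, with `u` an inverse of `2 * x` modulo `p`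
    refine ⟨x - d * u * p ^ (t + 1), ?_, d * v + d ^ 2 * u ^ 2 * p ^ t, ?_⟩
    · convert hx.add_mul_left_left (-2 * d * u * p ^ t) using 1
      ring
    · linear_combination hd - d * p ^ (t + 1) * huv

theorem natCast_mem_sumTwoSquares_prime_pow_of_not_dvd {p u : ℕ} [Fact p.Prime] (hp2 : p ≠ 2)
    (hu : ¬ p ∣ u) (t : ℕ) : (u : ZMod (p ^ t)) ∈ sumTwoSquares (p ^ t) := by
  obtain ⟨a, b, hab⟩ := ZMod.sq_add_sq p u
  wlog ha : a ≠ 0 generalizing a b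
  · refine this b a (by rw [← hab, add_comm]) fun hb => hu ?_
    rw [← ZMod.natCast_eq_zero_iff, ← hab, not_not.mp ha, hb]
    ring
  have hp : Prime (p : ℤ) := Nat.prime_iff_prime_int.mp Fact.out
  have hcop : IsCoprime (2 * (a.val : ℤ)) p := by
    refine (hp.coprime_iff_not_dvd.mpr ?_).symm
    rw [← ZMod.intCast_zmod_eq_zero_iff_dvd]
    push_cast
    rw [ZMod.natCast_zmod_val]
    refine mul_ne_zero ?_ ha
    exact_mod_cast (ZMod.natCast_eq_zero_iff 2 p).not.mpr
      fun h => hp2 ((Nat.prime_dvd_prime_iff_eq Fact.out Nat.prime_two).mp h)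
  have hdvd : (p : ℤ) ∣ (a.val : ℤ) ^ 2 - (u - (b.val : ℤ) ^ 2) := by
    rw [← ZMod.intCast_zmod_eq_zero_iff_dvd]
    push_cast
    rw [ZMod.natCast_zmod_val, ZMod.natCast_zmod_val, ← hab]
    ring
  obtain ⟨x, -, hx⟩ := exists_isCoprime_sq_sub_dvd_pow_succ hcop hdvd t
  refine ⟨x, b.val, ?_⟩
  have := (ZMod.intCast_eq_intCast_iff_dvd_sub (u - (b.val : ℤ) ^ 2) (x ^ 2) (p ^ t)).mpr
    (by push_cast; exact (pow_dvd_pow _ t.le_succ).trans hx)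
  push_cast at this
  linear_combination this

theorem natCast_mem_sumTwoSquares_prime_pow_of_even {p n : ℕ} [hp : Fact p.Prime] (hp2 : p ≠ 2)
    (hn : Even (padicValNat p n)) (s : ℕ) : (n : ZMod (p ^ s)) ∈ sumTwoSquares (p ^ s) := by
  rcases eq_or_ne n 0 with rfl | hn0
  · exact ⟨0, 0, by simp⟩
  obtain ⟨e, u, hu, rfl⟩ := Nat.exists_eq_pow_mul_and_not_dvd hn0 p hp.out.ne_one
  have he : padicValNat p (p ^ e * u) = e := by
    rw [padicValNat.mul (by simp [hp.out.ne_zero]) (by rintro rfl; simp at hu),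
      padicValNat.prime_pow, padicValNat.eq_zero_of_not_dvd hu, add_zero]
  obtain ⟨k, rfl⟩ := he ▸ hn
  obtain ⟨x, y, hxy⟩ := natCast_mem_sumTwoSquares_prime_pow_of_not_dvd hp2 hu s
  refine ⟨p ^ k * x, p ^ k * y, ?_⟩
  push_cast
  rw [hxy]
  ring

theorem even_padicValNat_sq_add_sq {p : ℕ} [hp : Fact p.Prime] (hp4 : p % 4 = 3) (x y : ℕ) :
    Even (padicValNat p (x ^ 2 + y ^ 2)) := by
  by_cases hmem : p ∈ (x ^ 2 + y ^ 2).primeFactors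
  · exact Nat.eq_sq_add_sq_iff.mp ⟨x, y, rfl⟩ p hmem hp4
  · rw [Nat.mem_primeFactors, not_and_or, not_and_or, not_not] at hmem
    have := hmem.resolve_left (not_not.mpr hp.out)
    rw [padicValNat.eq_zero_iff.mpr (by tauto)]
    exact Even.zero

theorem padicValNat_eq_of_modEq {p s a b : ℕ} [Fact p.Prime] (h : a ≡ b [MOD p ^ s])
    (hb : b ≠ 0) (hbs : padicValNat p b < s) : padicValNat p a = padicValNat p b := by
  have hdvd_iff {j : ℕ} (hj : j ≤ s) : p ^ j ∣ a ↔ p ^ j ∣ b := h.dvd_iff (pow_dvd_pow p hj)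
  have hb_dvd : p ^ padicValNat p b ∣ a := (hdvd_iff hbs.le).mpr pow_padicValNat_dvd
  have hb_ndvd : ¬ p ^ (padicValNat p b + 1) ∣ a :=
    (hdvd_iff hbs).not.mpr (pow_succ_padicValNat_not_dvd hb)
  have ha : a ≠ 0 := by rintro rfl; exact hb_ndvd (dvd_zero _)
  rw [padicValNat_dvd_iff_le ha] at hb_dvd hb_ndvd
  omega

theorem mem_sumTwoSquares_prime_pow_iff {p s : ℕ} [hp : Fact p.Prime] (hp4 : p % 4 = 3)
    (m : ZMod (p ^ s)) : m ∈ sumTwoSquares (p ^ s) ↔ Even (padicValNat p m.val) := by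
  refine ⟨?_, fun h => ZMod.natCast_zmod_val m ▸
    natCast_mem_sumTwoSquares_prime_pow_of_even (by omega) h s⟩
  rintro ⟨x, y, rfl⟩
  set n := (x ^ 2 + y ^ 2).val
  rcases eq_or_ne n 0 with hn0 | hn0
  · simp [hn0]
  have hns : padicValNat p n < s := by
    refine (Nat.pow_lt_pow_iff_right hp.out.one_lt).mp ?_
    exact (Nat.le_of_dvd (Nat.pos_of_ne_zero hn0) pow_padicValNat_dvd).trans_lt (ZMod.val_lt _)
  have hmod : x.val ^ 2 + y.val ^ 2 ≡ n [MOD p ^ s] := by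
    rw [← ZMod.natCast_eq_natCast_iff]
    push_cast
    simp only [n, ZMod.natCast_zmod_val]
  exact padicValNat_eq_of_modEq hmod hn0 hns ▸ even_padicValNat_sq_add_sq hp4 _ _

theorem ZMod.natCard_setOf_val_eq_count (n : ℕ) [NeZero n] (P : ℕ → Prop) [DecidablePred P] :
    Nat.card {m : ZMod n | P m.val} = Nat.count P n := by
  rw [Nat.count_eq_card_filter_range, ← Nat.card_eq_finsetCard]
  exact Nat.card_congr
    { toFun m := ⟨m.1.val, by simpa using ⟨m.1.val_lt, m.2⟩⟩
      invFun k := ⟨k.1, by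
        have hk := mem_filter.mp k.2
        simpa [ZMod.val_cast_of_lt (mem_range.mp hk.1)] using hk.2⟩
      left_inv m := Subtype.ext (ZMod.natCast_zmod_val m.1)
      right_inv k := Subtype.ext (ZMod.val_cast_of_lt (mem_range.mp (mem_filter.mp k.2).1)) }

theorem card_notSumTwoSquares_prime_pow {p : ℕ} [Fact p.Prime] (hp4 : p % 4 = 3) (s : ℕ) :
    Nat.card (notSumTwoSquares (p ^ s)) = Nat.count (fun n => Odd (padicValNat p n)) (p ^ s) := by
  have hset : notSumTwoSquares (p ^ s) = {m | Odd (padicValNat p m.val)} := by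
    ext m
    simp [notSumTwoSquares, mem_sumTwoSquares_prime_pow_iff hp4]
  rw [hset]
  exact ZMod.natCard_setOf_val_eq_count _ fun n => Odd (padicValNat p n)

theorem count_odd_padicValNat_pow_succ_add {p : ℕ} [hp : Fact p.Prime] (s : ℕ) :
    Nat.count (fun n => Odd (padicValNat p n)) (p ^ (s + 1)) +
      Nat.count (fun n => Odd (padicValNat p n)) (p ^ s) + 1 = p ^ s := by
  have hmul {m : ℕ} (hm : m ≠ 0) : padicValNat p (p * m) = padicValNat p m + 1 := by
    rw [padicValNat.mul hp.out.ne_zero hm, padicValNat_self, add_comm]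
  simp only [Nat.count_eq_card_filter_range]
  have hshift : #{n ∈ range (p ^ (s + 1)) | Odd (padicValNat p n)} =
      #{m ∈ range (p ^ s) | ¬ Odd (padicValNat p m) ∧ m ≠ 0} := by
    symm
    refine card_bij (fun m _ => p * m) ?_ ?_ ?_
    · simp only [mem_filter, mem_range, and_imp]
      intro m hm hodd hm0
      rw [pow_succ', Nat.mul_lt_mul_left hp.out.pos, hmul hm0, Nat.odd_add_one]
      exact ⟨hm, hodd⟩
    · intro m _ m' _ h
      exact Nat.eq_of_mul_eq_mul_left hp.out.pos h
    · simp only [mem_filter, mem_range, exists_prop, and_imp]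
      intro n hn hodd
      have hdvd : p ∣ n := by
        by_contra h
        simp [padicValNat.eq_zero_of_not_dvd h] at hodd
      obtain ⟨m, rfl⟩ := hdvd
      have hm0 : m ≠ 0 := by rintro rfl; simp at hodd
      rw [hmul hm0, Nat.odd_add_one] at hodd
      rw [pow_succ', Nat.mul_lt_mul_left hp.out.pos] at hn
      exact ⟨m, ⟨⟨hn, hodd, hm0⟩, rfl⟩⟩
  have hzero : #{m ∈ range (p ^ s) | ¬ Odd (padicValNat p m) ∧ m ≠ 0} + 1 =
      #{m ∈ range (p ^ s) | ¬ Odd (padicValNat p m)} := by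
    rw [← filter_filter, filter_ne', card_erase_add_one]
    simp [pow_pos hp.out.pos]
  have hsplit := card_filter_add_card_filter_not (s := range (p ^ s))
    (p := fun n => Odd (padicValNat p n))
  rw [card_range] at hsplit
  omega

theorem count_odd_padicValNat_pow_mul_add {p : ℕ} [Fact p.Prime] (s : ℕ) :
    Nat.count (fun n => Odd (padicValNat p n)) (p ^ s) * (p + 1) + p ^ (s % 2) = p ^ s := by
  induction s with
  | zero => simp [Nat.count_eq_card_filter_range]
  | succ s ih =>
    have hrec := count_odd_padicValNat_pow_succ_add (p := p) s
    rcases Nat.mod_two_eq_zero_or_one s with hs | hs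
    · rw [show (s + 1) % 2 = 1 by omega, pow_one]
      rw [hs, pow_zero] at ih
      linear_combination (p + 1) * hrec - ih
    · rw [show (s + 1) % 2 = 0 by omega, pow_zero]
      rw [hs, pow_one] at ih
      linear_combination (p + 1) * hrec - ih

theorem tendsto_pow_mod_two_div_pow {x : ℝ} (hx : 1 < x) :
    Tendsto (fun s : ℕ => x ^ (s % 2) / x ^ s) atTop (nhds 0) := by
  have hx0 : 0 < x := one_pos.trans hx
  have hbound (s : ℕ) : x ^ (s % 2) / x ^ s ≤ x * x⁻¹ ^ s := by
    rw [div_eq_mul_inv, ← inv_pow]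
    gcongr
    exact (pow_le_pow_right₀ hx.le (Nat.lt_succ_iff.mp (Nat.mod_lt s two_pos))).trans_eq (pow_one x)
  have hgeom := (tendsto_pow_atTop_nhds_zero_of_lt_one (inv_nonneg.mpr hx0.le)
    (inv_lt_one_of_one_lt₀ hx)).const_mul x
  rw [mul_zero] at hgeom
  exact squeeze_zero (fun s => by positivity) hbound hgeom

/-- For a prime `p ≡ 3 (mod 4)`, the densities `r(N_{p^s}) = |N_{p^s}|/p^s` converge to
`1/(p+1)` as `s → ∞`. -/
theorem tendsto_dens_notSumTwoSquares_prime_pow (p : ℕ) (hp : p.Prime) (hp4 : p % 4 = 3) :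
    Tendsto (fun s : ℕ => (Nat.card (notSumTwoSquares (p ^ s)) : ℝ) / (p : ℝ) ^ s)
      atTop (nhds (1 / ((p : ℝ) + 1))) := by
  have := Fact.mk hp
  have hdens (s : ℕ) : (Nat.card (notSumTwoSquares (p ^ s)) : ℝ) / (p : ℝ) ^ s =
      (1 - (p : ℝ) ^ (s % 2) / (p : ℝ) ^ s) * (1 / ((p : ℝ) + 1)) := by
    have hcount : (Nat.card (notSumTwoSquares (p ^ s)) : ℝ) * (p + 1) + p ^ (s % 2) = p ^ s := by
      exact_mod_cast card_notSumTwoSquares_prime_pow hp4 s ▸ count_odd_padicValNat_pow_mul_add s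
    have hps : (p : ℝ) ^ s ≠ 0 := pow_ne_zero s (Nat.cast_ne_zero.mpr hp.ne_zero)
    field_simp
    linear_combination hcount
  have hlim : Tendsto (fun s : ℕ => (1 - (p : ℝ) ^ (s % 2) / (p : ℝ) ^ s) * (1 / ((p : ℝ) + 1)))
      atTop (nhds ((1 - 0) * (1 / ((p : ℝ) + 1)))) :=
    (tendsto_const_nhds.sub (tendsto_pow_mod_two_div_pow (by exact_mod_cast hp.one_lt))).mul_const _
  rw [sub_zero, one_mul] at hlim
  simpa only [hdens] using hlim
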